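/- Every valid modified log-Sobolev constant of the multislice Ω_κ is at least 1/2: if τ ∈ ℝ satisfies Ent_κ(f) ≤ τ·𝔈_κ(f, log f) for all strictly positive f : Ω_κ → (0,∞), then τ ≥ 1/2. -/

import Mathlib

open Finset

namespace Multislice

/-- The multislice `Ω_κ`: sequences of length `n` with values in `Fin L`
in which color `ℓ` appears exactly `κ ℓ` times. -/
def slice (L n : ℕ) (κ : Fin L → ℕ) : Finset (Fin n → Fin L) :=
  Finset.univ.filter fun ω => ∀ ℓ, (Finset.univ.filter fun i => ω i = ℓ).card = κ ℓ

/-- Average of `f` with respect to the uniform distribution on `Ω`. -/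
noncomputable def expect {L n : ℕ} (Ω : Finset (Fin n → Fin L))
    (f : (Fin n → Fin L) → ℝ) : ℝ :=
  (∑ ω ∈ Ω, f ω) / Ω.card

/-- Discrete gradient `(∇^{ij} f)(ω) = f(ω^{ij}) - f(ω)`. -/
noncomputable def grad {L n : ℕ} (i j : Fin n) (f : (Fin n → Fin L) → ℝ)
    (ω : Fin n → Fin L) : ℝ :=
  f (ω ∘ Equiv.swap i j) - f ω

/-- The Dirichlet form `𝔈_κ(f,g) = (1/(2n)) Σ_{i<j} E[(∇^{ij}f)(∇^{ij}g)]`. -/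
noncomputable def dirichlet {L n : ℕ} (Ω : Finset (Fin n → Fin L))
    (f g : (Fin n → Fin L) → ℝ) : ℝ :=
  (1 / (2 * (n : ℝ))) *
    ∑ p ∈ Finset.univ.filter (fun p : Fin n × Fin n => p.1 < p.2),
      expect Ω fun ω => grad p.1 p.2 f ω * grad p.1 p.2 g ω

/-- The weighted Dirichlet form `𝔈^G_κ(f,g) = (1/2) Σ_{i<j} G_{ij} E[(∇^{ij}f)(∇^{ij}g)]`. -/
noncomputable def wDirichlet {L n : ℕ} (G : Fin n → Fin n → ℝ)
    (Ω : Finset (Fin n → Fin L)) (f g : (Fin n → Fin L) → ℝ) : ℝ :=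
  (1 / 2) *
    ∑ p ∈ Finset.univ.filter (fun p : Fin n × Fin n => p.1 < p.2),
      G p.1 p.2 * expect Ω fun ω => grad p.1 p.2 f ω * grad p.1 p.2 g ω

/-- Entropy `Ent(f) = E[f log f] - E[f] log E[f]` (note `Real.log 0 = 0`). -/
noncomputable def entropy {L n : ℕ} (Ω : Finset (Fin n → Fin L))
    (f : (Fin n → Fin L) → ℝ) : ℝ :=
  expect Ω (fun ω => f ω * Real.log (f ω)) - expect Ω f * Real.log (expect Ω f)

/-- Variance `Var(f) = E[f²] - (E[f])²`. -/
noncomputable def variance {L n : ℕ} (Ω : Finset (Fin n → Fin L))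
    (f : (Fin n → Fin L) → ℝ) : ℝ :=
  expect Ω (fun ω => f ω ^ 2) - (expect Ω f) ^ 2

/-- The edge boundary `∂A` of `A ⊆ Ω`: edges (recorded as pairs with first endpoint
in `A` and second endpoint in `Ω \ A`) between `A` and its complement, where two
states are adjacent when they differ in exactly two coordinates. -/
def edgeBoundary {L n : ℕ} (Ω A : Finset (Fin n → Fin L)) :
    Finset ((Fin n → Fin L) × (Fin n → Fin L)) :=
  (A ×ˢ (Ω \ A)).filter fun p => (Finset.univ.filter fun i => p.1 i ≠ p.2 i).card = 2

/-- The `ℓ`-colored region `ξ_ℓ(ω) = {i : ω i = ℓ}`. -/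
def xi {L n : ℕ} (ℓ : Fin L) (ω : Fin n → Fin L) : Finset (Fin n) :=
  Finset.univ.filter fun i => ω i = ℓ

/-- The parameter `κ^{∖ℓ}` obtained from `κ` by removing the `ℓ`-th entry. -/
def removeIdx {L : ℕ} (κ : Fin L → ℕ) (ℓ : Fin L) (m : Fin (L - 1)) : ℕ :=
  if (m : ℕ) < (ℓ : ℕ) then κ ⟨m, by have := m.isLt; omega⟩
  else κ ⟨(m : ℕ) + 1, by have := m.isLt; omega⟩

/-!
Test the inequality on `f = 1 + ε·1{ω 0 = ℓ}`. With `p = κ ℓ / n`, its entropy is the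
two-point quantity `p φ(1+ε) - φ(1+εp) = ε² p(1-p)/2 + O(ε³)`, `φ(x) = x log x`, while
`𝔈(f, log f) = ε log(1+ε) p(1-p)`: only transpositions moving coordinate `0` see `f`, and
exchangeability of the coordinates gives `E[1{ω 0 = ℓ}] = p`. Dividing by `ε²` and letting
`ε → 0` leaves `p(1-p)/2 ≤ τ p(1-p)`.
-/

open Real Filter Topology

lemma abs_log_one_add_sub_le {x : ℝ} (hx : |x| ≤ 1 / 2) :
    |log (1 + x) - (x - x ^ 2 / 2)| ≤ 2 * |x| ^ 3 := by
  have h := abs_log_sub_add_sum_range_le (x := -x) (by rw [abs_neg]; linarith) 2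
  have htaylor : ∑ i ∈ range 2, (-x) ^ (i + 1) / (i + 1) + log (1 - -x) =
      log (1 + x) - (x - x ^ 2 / 2) := by
    simp only [sum_range_succ, sum_range_zero, sub_neg_eq_add]; ring
  rw [htaylor, abs_neg] at h
  calc |log (1 + x) - (x - x ^ 2 / 2)| ≤ |x| ^ 3 / (1 - |x|) := h
    _ ≤ 2 * |x| ^ 3 := by
        rw [div_le_iff₀ (by linarith)]; nlinarith [pow_nonneg (abs_nonneg x) 3]

lemma two_point_entropy_ge {p ε : ℝ} (hp₀ : 0 ≤ p) (hp₁ : p ≤ 1) (hε₀ : 0 ≤ ε)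
    (hε₁ : ε ≤ 1 / 2) :
    p * (1 - p) * ε ^ 2 / 2 - 6 * ε ^ 3 ≤
      p * ((1 + ε) * log (1 + ε)) - (1 + ε * p) * log (1 + ε * p) := by
  have hεp₀ : 0 ≤ ε * p := mul_nonneg hε₀ hp₀
  have hεp₁ : ε * p ≤ ε := mul_le_of_le_one_right hε₀ hp₁
  have h₁ := abs_le.1 (abs_log_one_add_sub_le (x := ε) (by rwa [abs_of_nonneg hε₀]))
  have h₂ := abs_le.1 (abs_log_one_add_sub_le (x := ε * p) (by rw [abs_of_nonneg hεp₀]; linarith))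
  rw [abs_of_nonneg hε₀] at h₁
  rw [abs_of_nonneg hεp₀] at h₂
  have hlow : p * ((1 + ε) * (ε - ε ^ 2 / 2 - 2 * ε ^ 3)) ≤ p * ((1 + ε) * log (1 + ε)) := by
    gcongr; linarith
  have hup : (1 + ε * p) * log (1 + ε * p) ≤
      (1 + ε * p) * (ε * p - (ε * p) ^ 2 / 2 + 2 * (ε * p) ^ 3) := by
    gcongr; linarith
  have hpoly : p * ((1 + ε) * (ε - ε ^ 2 / 2 - 2 * ε ^ 3)) -
      (1 + ε * p) * (ε * p - (ε * p) ^ 2 / 2 + 2 * (ε * p) ^ 3) ≥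
      p * (1 - p) * ε ^ 2 / 2 - 6 * ε ^ 3 := by
    have hp3 : p ^ 3 ≤ 1 := pow_le_one₀ hp₀ hp₁
    have hp4 : p ^ 4 ≤ 1 := pow_le_one₀ hp₀ hp₁
    have hε3 : 0 ≤ ε ^ 3 := by positivity
    nlinarith [mul_le_mul_of_nonneg_left hp₁ hε3, mul_le_mul_of_nonneg_left hp3 hε3,
      mul_le_mul_of_nonneg_left hp4 hε3, mul_le_mul_of_nonneg_left hε₁ hε3]
  linarith

lemma half_le_of_two_point_bound {q τ : ℝ} (hq : 0 < q)
    (h : ∀ ε ∈ Set.Ioc (0 : ℝ) (1 / 2), q * ε ^ 2 / 2 - 6 * ε ^ 3 ≤ τ * (ε * log (1 + ε) * q)) :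
    1 / 2 ≤ τ := by
  have hslope : Tendsto (fun ε : ℝ => ε⁻¹ * log (1 + ε)) (𝓝[>] 0) (𝓝 1) := by
    simpa [add_comm] using (hasDerivAt_log one_ne_zero).tendsto_slope_zero_right
  have hlhs : Tendsto (fun ε : ℝ => q / 2 - 6 * ε) (𝓝[>] 0) (𝓝 (q / 2)) :=
    ((continuous_const.sub (continuous_const.mul continuous_id)).tendsto' 0 _
      (by simp)).mono_left nhdsWithin_le_nhds
  have hle : q / 2 ≤ τ * q * 1 := by
    refine le_of_tendsto_of_tendsto hlhs (hslope.const_mul (τ * q)) ?_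
    filter_upwards [Ioc_mem_nhdsGT (by norm_num : (0 : ℝ) < 1 / 2)] with ε hε
    rw [← mul_le_mul_iff_of_pos_right (pow_pos hε.1 2)]
    calc (q / 2 - 6 * ε) * ε ^ 2 = q * ε ^ 2 / 2 - 6 * ε ^ 3 := by ring
      _ ≤ τ * (ε * log (1 + ε) * q) := h ε hε
      _ = τ * q * (ε⁻¹ * log (1 + ε)) * ε ^ 2 := by field_simp
  nlinarith

section Expect

variable {L n : ℕ} (Ω : Finset (Fin n → Fin L))

lemma expect_const_mul (c : ℝ) (g : (Fin n → Fin L) → ℝ) :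
    expect Ω (fun ω => c * g ω) = c * expect Ω g := by
  rw [expect, expect, ← mul_sum, mul_div_assoc]

lemma expect_const (hΩ : Ω.Nonempty) (c : ℝ) : expect Ω (fun _ => c) = c := by
  have hcard : (Ω.card : ℝ) ≠ 0 := by exact_mod_cast hΩ.card_pos.ne'
  rw [expect, sum_const, nsmul_eq_mul, mul_div_cancel_left₀ _ hcard]

lemma expect_const_add_mul (hΩ : Ω.Nonempty) (a b : ℝ) (g : (Fin n → Fin L) → ℝ) :
    expect Ω (fun ω => a + b * g ω) = a + b * expect Ω g := by
  have hcard : (Ω.card : ℝ) ≠ 0 := by exact_mod_cast hΩ.card_pos.ne'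
  rw [expect, expect, sum_add_distrib, sum_const, nsmul_eq_mul, ← mul_sum]
  field_simp

lemma expect_sum {ι : Type*} (s : Finset ι) (F : ι → (Fin n → Fin L) → ℝ) :
    expect Ω (fun ω => ∑ i ∈ s, F i ω) = ∑ i ∈ s, expect Ω (F i) := by
  simp only [expect, sum_comm (s := Ω), sum_div]

lemma expect_congr {f g : (Fin n → Fin L) → ℝ} (h : ∀ ω ∈ Ω, f ω = g ω) :
    expect Ω f = expect Ω g := by
  rw [expect, expect, sum_congr rfl h]

lemma expect_comp_perm (σ : Equiv.Perm (Fin n)) (hΩ : ∀ ω, ω ∘ σ ∈ Ω ↔ ω ∈ Ω)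
    (g : (Fin n → Fin L) → ℝ) :
    expect Ω (fun ω => g (ω ∘ σ)) = expect Ω g := by
  rw [expect, expect]
  congr 1
  refine sum_nbij' (· ∘ σ) (· ∘ σ.symm) (fun ω hω => (hΩ ω).2 hω)
    (fun ω hω => (hΩ _).1 (by simpa [Function.comp_assoc] using hω))
    (fun ω _ => by simp [Function.comp_assoc]) (fun ω _ => by simp [Function.comp_assoc])
    (fun _ _ => rfl)

end Expect

lemma grad_const_add_mul {L n : ℕ} (i j : Fin n) (a b : ℝ) (g : (Fin n → Fin L) → ℝ)
    (ω : Fin n → Fin L) :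
    grad i j (fun ω => a + b * g ω) ω = b * grad i j g ω := by
  simp only [grad]; ring

lemma dirichlet_const_add_mul_mul {L n : ℕ} (Ω : Finset (Fin n → Fin L)) (a b c : ℝ)
    (g : (Fin n → Fin L) → ℝ) :
    dirichlet Ω (fun ω => a + b * g ω) (fun ω => c * g ω) = b * c * dirichlet Ω g g := by
  have hc : (fun ω => c * g ω) = fun ω => 0 + c * g ω := by simp
  simp only [dirichlet, hc, grad_const_add_mul, mul_mul_mul_comm b, expect_const_mul, ← mul_sum]
  ring

section Indicator

variable {L n : ℕ} (Ω : Finset (Fin n → Fin L)) (P : (Fin n → Fin L) → Prop) [DecidablePred P]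

lemma entropy_one_add_mul_indicator (hΩ : Ω.Nonempty) (ε : ℝ) :
    entropy Ω (fun ω => 1 + ε * if P ω then 1 else 0) =
      expect Ω (fun ω => if P ω then 1 else 0) * ((1 + ε) * log (1 + ε)) -
        (1 + ε * expect Ω (fun ω => if P ω then 1 else 0)) *
          log (1 + ε * expect Ω (fun ω => if P ω then 1 else 0)) := by
  have hφ : (fun ω => (1 + ε * if P ω then 1 else 0) * log (1 + ε * if P ω then 1 else 0)) =
      fun ω => (1 + ε) * log (1 + ε) * if P ω then 1 else 0 := by
    funext ω; split_ifs <;> simp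
  rw [entropy, hφ, expect_const_mul, expect_const_add_mul Ω hΩ]
  ring

lemma dirichlet_one_add_mul_indicator_log (ε : ℝ) :
    dirichlet Ω (fun ω => 1 + ε * if P ω then 1 else 0)
        (fun ω => log (1 + ε * if P ω then 1 else 0)) =
      ε * log (1 + ε) * dirichlet Ω (fun ω => if P ω then 1 else 0)
        (fun ω => if P ω then 1 else 0) := by
  have hlog : (fun ω => log (1 + ε * if P ω then 1 else 0)) =
      fun ω => log (1 + ε) * if P ω then 1 else 0 := by
    funext ω; split_ifs <;> simp
  rw [hlog, dirichlet_const_add_mul_mul]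

end Indicator

lemma sum_lt_pairs_eq_sum_zero {m : ℕ} (F : Fin (m + 1) → Fin (m + 1) → ℝ)
    (hF : ∀ i j, i ≠ 0 → j ≠ 0 → F i j = 0) (hF₀ : F 0 0 = 0) :
    ∑ p ∈ univ.filter (fun p : Fin (m + 1) × Fin (m + 1) => p.1 < p.2), F p.1 p.2 =
      ∑ j, F 0 j := by
  rw [sum_filter, Fintype.sum_prod_type, sum_eq_single 0]
  · refine sum_congr rfl fun j _ => ?_
    rcases eq_or_ne j 0 with rfl | hj
    · simp [hF₀]
    · simp [Fin.pos_iff_ne_zero.2 hj]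
  · intro i _ hi
    refine sum_eq_zero fun j _ => ?_
    split_ifs with hij
    · exact hF i j hi (ne_of_gt (lt_of_le_of_lt (Fin.zero_le i) hij))
    · rfl
  · simp

section Slice

variable {L n : ℕ} {κ : Fin L → ℕ}

lemma mem_slice {ω : Fin n → Fin L} :
    ω ∈ slice L n κ ↔ ∀ ℓ, (univ.filter fun i => ω i = ℓ).card = κ ℓ := by
  simp [slice]

lemma comp_perm_mem_slice (σ : Equiv.Perm (Fin n)) (ω : Fin n → Fin L) :
    ω ∘ σ ∈ slice L n κ ↔ ω ∈ slice L n κ := by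
  simp only [mem_slice]
  refine forall_congr' fun ℓ => ?_
  rw [card_equiv σ (t := univ.filter fun i => ω i = ℓ) (by simp)]

lemma slice_nonempty (hn : n = ∑ ℓ, κ ℓ) : (slice L n κ).Nonempty := by
  have e : (Σ ℓ : Fin L, Fin (κ ℓ)) ≃ Fin n := Fintype.equivOfCardEq (by simp [hn])
  refine ⟨fun i => (e.symm i).1, mem_slice.2 fun ℓ => ?_⟩
  rw [card_equiv e.symm (t := univ.filter fun x : Σ ℓ, Fin (κ ℓ) => x.1 = ℓ) (by simp)]
  rw [← Fintype.card_subtype, Fintype.card_congr (Equiv.sigmaSubtype ℓ), Fintype.card_fin]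

lemma sum_indicator_of_mem_slice {ω : Fin n → Fin L} (hω : ω ∈ slice L n κ) (ℓ : Fin L) :
    ∑ j, (if ω j = ℓ then (1 : ℝ) else 0) = κ ℓ := by
  rw [sum_boole, mem_slice.1 hω ℓ]

lemma expect_slice_indicator (hΩ : (slice L n κ).Nonempty) (i : Fin n) (ℓ : Fin L) :
    expect (slice L n κ) (fun ω => if ω i = ℓ then 1 else 0) = κ ℓ / n := by
  have hexch : ∀ j, expect (slice L n κ) (fun ω => if ω j = ℓ then 1 else 0) =
      expect (slice L n κ) (fun ω => if ω i = ℓ then 1 else 0) := fun j => by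
    rw [← expect_comp_perm _ (Equiv.swap i j) (comp_perm_mem_slice _)]
    simp
  have hsum := expect_sum (slice L n κ) univ fun j ω => if ω j = ℓ then (1 : ℝ) else 0
  rw [expect_congr _ fun ω hω => sum_indicator_of_mem_slice hω ℓ, sum_congr rfl fun j _ => hexch j,
    sum_const, card_univ, Fintype.card_fin, nsmul_eq_mul, expect_const _ hΩ] at hsum
  have hn : (n : ℝ) ≠ 0 := by exact_mod_cast (Fin.pos i).ne'
  rw [hsum, mul_div_cancel_left₀ _ hn]

lemma sum_grad_mul_grad_indicator {m : ℕ} {ω : Fin (m + 1) → Fin L}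
    (hω : ω ∈ slice L (m + 1) κ) (ℓ : Fin L) :
    ∑ p ∈ univ.filter (fun p : Fin (m + 1) × Fin (m + 1) => p.1 < p.2),
        grad p.1 p.2 (fun ω => if ω 0 = ℓ then 1 else 0) ω *
          grad p.1 p.2 (fun ω => if ω 0 = ℓ then 1 else 0) ω =
      κ ℓ + ((m + 1 : ℝ) - 2 * κ ℓ) * if ω 0 = ℓ then 1 else 0 := by
  rw [sum_lt_pairs_eq_sum_zero (fun i j => grad i j _ ω * grad i j _ ω)
    (fun i j hi hj => by simp [grad, Equiv.swap_apply_of_ne_of_ne hi.symm hj.symm])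
    (by simp [grad])]
  have hsq : ∀ j, grad 0 j (fun ω => if ω 0 = ℓ then (1 : ℝ) else 0) ω *
      grad 0 j (fun ω => if ω 0 = ℓ then (1 : ℝ) else 0) ω =
      (if ω j = ℓ then 1 else 0) + (if ω 0 = ℓ then 1 else 0) -
        2 * (if ω 0 = ℓ then 1 else 0) * (if ω j = ℓ then 1 else 0) := fun j => by
    simp only [grad, Function.comp_apply, Equiv.swap_apply_left]
    split_ifs <;> norm_num
  simp only [hsq, sum_sub_distrib, sum_add_distrib, ← mul_sum, sum_indicator_of_mem_slice hω,
    sum_const, card_univ, Fintype.card_fin, nsmul_eq_mul]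
  push_cast
  ring

lemma dirichlet_slice_indicator {m : ℕ} (hΩ : (slice L (m + 1) κ).Nonempty)
    (ℓ : Fin L) :
    dirichlet (slice L (m + 1) κ) (fun ω => if ω 0 = ℓ then 1 else 0)
        (fun ω => if ω 0 = ℓ then 1 else 0) =
      κ ℓ / ((m + 1 : ℕ) : ℝ) * (1 - κ ℓ / ((m + 1 : ℕ) : ℝ)) := by
  rw [dirichlet, ← expect_sum, expect_congr _ fun ω hω => sum_grad_mul_grad_indicator hω ℓ,
    expect_const_add_mul _ hΩ, expect_slice_indicator hΩ]
  push_cast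
  field_simp
  ring

end Slice

/-- every valid modified log-Sobolev constant of the multislice is at
least `1/2`. -/
theorem multislice_mlsi_lower
    (L : ℕ) (hL : 2 ≤ L) (κ : Fin L → ℕ) (hκ : ∀ ℓ, 0 < κ ℓ)
    (n : ℕ) (hn : n = ∑ ℓ, κ ℓ)
    (τ : ℝ)
    (hτ : ∀ f : (Fin n → Fin L) → ℝ, (∀ ω, 0 < f ω) →
      entropy (slice L n κ) f ≤
        τ * dirichlet (slice L n κ) f (fun ω => Real.log (f ω))) :
    (1 : ℝ) / 2 ≤ τ := by
  let ℓ₀ : Fin L := ⟨0, by omega⟩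
  have hκn : κ ℓ₀ < n := hn ▸ single_lt_sum (j := ⟨1, by omega⟩) (by simp [ℓ₀, Fin.ext_iff])
    (mem_univ _) (mem_univ _) (hκ _) fun _ _ _ => Nat.zero_le _
  obtain ⟨m, rfl⟩ : ∃ m, n = m + 1 := Nat.exists_eq_add_one.2 (by have := hκ ℓ₀; omega)
  have hΩ := slice_nonempty hn
  set p : ℝ := κ ℓ₀ / ((m + 1 : ℕ) : ℝ)
  have hp₀ : 0 < p := by have := hκ ℓ₀; positivity
  have hp₁ : p < 1 := (div_lt_one (by positivity)).2 (by exact_mod_cast hκn)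
  refine half_le_of_two_point_bound (q := p * (1 - p)) (by nlinarith) fun ε hε => ?_
  have hε₀ : 0 < ε := hε.1
  have hmlsi := hτ (fun ω => 1 + ε * if ω 0 = ℓ₀ then 1 else 0) fun ω => by positivity
  rw [entropy_one_add_mul_indicator _ _ hΩ, dirichlet_one_add_mul_indicator_log,
    dirichlet_slice_indicator hΩ, expect_slice_indicator hΩ] at hmlsi
  exact (two_point_entropy_ge hp₀.le hp₁.le hε₀.le hε.2).trans hmlsi

end Multislice
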